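/- Let P be a finite poset, R a consistent restriction function on P, p ∈ P, and k ∈ R(p) with k ≠ max R(p). Then there is exactly one meet-irreducible element f of the lattice Inc_R(P) such that f(p) = k and p is the only raisable element of f. -/

import Mathlib

/-- An increasing labeling of the finite poset `P` with respect to the
restriction function `R`. -/
def IncLabel {P : Type*} [PartialOrder P] (R : P → Finset ℤ) (f : P → ℤ) : Prop :=
  (∀ p, f p ∈ R p) ∧ ∀ ⦃p₁ p₂ : P⦄, p₁ < p₂ → f p₁ < f p₂

/-- `R` is consistent: minima and maxima of the label sets strictly increase
along covering relations. -/
def Consistent {P : Type*} [PartialOrder P] (R : P → Finset ℤ)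
    (hR : ∀ p, (R p).Nonempty) : Prop :=
  ∀ x y : P, x ⋖ y →
    (R x).min' (hR x) < (R y).min' (hR y) ∧ (R x).max' (hR x) < (R y).max' (hR y)

/-- An element `p` is raisable in `f` if its value can be strictly increased,
keeping all other values fixed, while remaining an increasing labeling. -/
def Raisable {P : Type*} [PartialOrder P] (R : P → Finset ℤ) (f : P → ℤ) (p : P) : Prop :=
  ∃ g : P → ℤ, IncLabel R g ∧ f p < g p ∧ ∀ p' : P, p' ≠ p → f p' = g p'

/-- `f` is a meet-irreducible element of the lattice `Inc_R(P)` (ordered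
pointwise, with meet given by pointwise minimum): it is not the maximum
element, and whenever it is the meet of two elements it equals one of them. -/
def MeetIrred {P : Type*} [PartialOrder P] (R : P → Finset ℤ) (f : P → ℤ) : Prop :=
  IncLabel R f ∧ ¬ (∀ g : P → ℤ, IncLabel R g → ∀ p, g p ≤ f p) ∧
  ∀ a b : P → ℤ, IncLabel R a → IncLabel R b →
    (f = fun p => min (a p) (b p)) → f = a ∨ f = b

/-!
Among the labelings with value at most `k` at `p`, which are closed under pointwise maximum,
there is a greatest one, `M`. It takes the value `k` at `p` and the largest admissible value
off the down-set of `p`; hence `p` is its only raisable element, and it is meet irreducible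
because a meet `a ⊓ b = M` forces `a p = k` or `b p = k`, and then `a ≤ M` or `b ≤ M`.
Conversely, if `f ≤ M` has value `k` at `p` and `f ≠ M`, a maximal point where `f < M` can
be raised in `f` up to its value in `M`, so `p` is not the only raisable element of `f`.
-/

open Set

lemma SupClosed.exists_isGreatest_of_finite {α : Type*} [SemilatticeSup α] {s : Set α}
    (hs : SupClosed s) (hfin : s.Finite) (hne : s.Nonempty) : ∃ a, IsGreatest s a := by
  obtain ⟨m, hm⟩ := hfin.exists_maximal hne
  exact ⟨m, hm.prop, fun x hx => hm.eq_of_le (hs hm.prop hx) le_sup_left ▸ le_sup_right⟩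

section Labelings

variable {P : Type*} [PartialOrder P] {R : P → Finset ℤ}

def minLabel (R : P → Finset ℤ) (hR : ∀ p, (R p).Nonempty) (q : P) : ℤ := (R q).min' (hR q)

def maxLabel (R : P → Finset ℤ) (hR : ∀ p, (R p).Nonempty) (q : P) : ℤ := (R q).max' (hR q)

def labelsAtMost (R : P → Finset ℤ) (p : P) (k : ℤ) : Set (P → ℤ) :=
  {f | IncLabel R f ∧ f p ≤ k}

namespace IncLabel

variable {f g : P → ℤ}

lemma le_maxLabel (hR : ∀ p, (R p).Nonempty) (hf : IncLabel R f) : f ≤ maxLabel R hR :=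
  fun q => (R q).le_max' _ (hf.1 q)

lemma sup (hf : IncLabel R f) (hg : IncLabel R g) : IncLabel R (f ⊔ g) := by
  refine ⟨fun q => ?_, fun a b hab => max_lt_max (hf.2 hab) (hg.2 hab)⟩
  rcases max_choice (f q) (g q) with h | h
  · simpa [h] using hf.1 q
  · simpa [h] using hg.1 q

lemma piecewise (U : Set P) [∀ q, Decidable (q ∈ U)] (hU : IsUpperSet U)
    (hf : IncLabel R f) (hg : IncLabel R g) (hgf : g ≤ f) : IncLabel R (U.piecewise f g) := by
  refine ⟨fun q => ?_, fun a b hab => ?_⟩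
  · by_cases hq : q ∈ U
    · simpa [hq] using hf.1 q
    · simpa [hq] using hg.1 q
  · by_cases hb : b ∈ U
    · by_cases ha : a ∈ U
      · simpa [ha, hb] using hf.2 hab
      · simpa [ha, hb] using (hg.2 hab).trans_le (hgf b)
    · have ha : a ∉ U := fun ha => hb (hU hab.le ha)
      simpa [ha, hb] using hg.2 hab

lemma update [DecidableEq P] (hf : IncLabel R f) {q : P} {v : ℤ} (hv : v ∈ R q)
    (hlt : ∀ a, a < q → f a < v) (hgt : ∀ b, q < b → v < f b) :
    IncLabel R (Function.update f q v) := by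
  refine ⟨fun r => ?_, fun a b hab => ?_⟩
  · by_cases hr : r = q
    · subst hr; simpa using hv
    · simpa [hr] using hf.1 r
  · by_cases ha : a = q
    · subst ha; simpa [hab.ne'] using hgt b hab
    · by_cases hb : b = q
      · subst hb; simpa [ha] using hlt a hab
      · simpa [ha, hb] using hf.2 hab

lemma raisable_of_update (hf : IncLabel R f) {q : P} {v : ℤ} (hv : v ∈ R q) (hfv : f q < v)
    (hlt : ∀ a, a < q → f a < v) (hgt : ∀ b, q < b → v < f b) : Raisable R f q := by
  classical
  exact ⟨Function.update f q v, hf.update hv hlt hgt, by simpa using hfv,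
    fun r hr => (Function.update_of_ne hr v f).symm⟩

lemma exists_raisable_of_lt [Finite P] (hf : IncLabel R f) (hg : IncLabel R g) (hfg : f < g) :
    ∃ q, f q < g q ∧ Raisable R f q := by
  obtain ⟨hle, hne⟩ := Pi.lt_def.1 hfg
  obtain ⟨q, hq⟩ := (toFinite {q | f q < g q}).exists_maximal hne
  have heq : ∀ b, q < b → f b = g b := fun b hqb =>
    (hle b).eq_of_not_lt fun hb => hq.not_gt hb hqb
  refine ⟨q, hq.prop, hf.raisable_of_update (hg.1 q) hq.prop
    (fun a haq => (hf.2 haq).trans hq.prop) fun b hqb => ?_⟩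
  rw [heq b hqb]
  exact hg.2 hqb

end IncLabel

lemma setOf_incLabel_finite [Finite P] : {f | IncLabel R f}.Finite :=
  (Set.Finite.pi' fun q => (R q).finite_toSet).subset fun _ hf => hf.1

end Labelings

namespace Consistent

variable {P : Type*} [PartialOrder P] {R : P → Finset ℤ} [Finite P] {hR : ∀ p, (R p).Nonempty}

lemma strictMono_minLabel (hcons : Consistent R hR) : StrictMono (minLabel R hR) := by
  classical
  cases nonempty_fintype P
  let _ := Fintype.toLocallyFiniteOrder (α := P)
  exact (strictMono_iff_forall_covBy _).2 fun x y hxy => (hcons x y hxy).1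

lemma strictMono_maxLabel (hcons : Consistent R hR) : StrictMono (maxLabel R hR) := by
  classical
  cases nonempty_fintype P
  let _ := Fintype.toLocallyFiniteOrder (α := P)
  exact (strictMono_iff_forall_covBy _).2 fun x y hxy => (hcons x y hxy).2

lemma incLabel_minLabel (hcons : Consistent R hR) : IncLabel R (minLabel R hR) :=
  ⟨fun q => (R q).min'_mem _, fun _ _ hab => hcons.strictMono_minLabel hab⟩

lemma incLabel_maxLabel (hcons : Consistent R hR) : IncLabel R (maxLabel R hR) :=
  ⟨fun q => (R q).max'_mem _, fun _ _ hab => hcons.strictMono_maxLabel hab⟩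

lemma exists_incLabel_apply_eq (hcons : Consistent R hR) {p : P} {k : ℤ} (hk : k ∈ R p) :
    ∃ f, IncLabel R f ∧ f p = k := by
  classical
  set g := (Ici p).piecewise (maxLabel R hR) (minLabel R hR)
  have hg : IncLabel R g := hcons.incLabel_maxLabel.piecewise _ (isUpperSet_Ici p)
    hcons.incLabel_minLabel (hcons.incLabel_minLabel.le_maxLabel hR)
  refine ⟨Function.update g p k, hg.update hk (fun a hap => ?_) (fun b hpb => ?_), by simp⟩
  · have ha : a ∉ Ici p := fun h => (h.trans_lt hap).false
    simpa [g, ha] using (hcons.strictMono_minLabel hap).trans_le ((R p).min'_le _ hk)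
  · simpa [g, hpb.le] using ((R p).le_max' _ hk).trans_lt (hcons.strictMono_maxLabel hpb)

lemma exists_isGreatest_labelsAtMost (hcons : Consistent R hR) {p : P} {k : ℤ}
    (hk : k ∈ R p) : ∃ M, IsGreatest (labelsAtMost R p k) M ∧ M p = k := by
  obtain ⟨f, hf, hfp⟩ := hcons.exists_incLabel_apply_eq hk
  have hsup : SupClosed (labelsAtMost R p k) := fun a ha b hb =>
    ⟨ha.1.sup hb.1, max_le ha.2 hb.2⟩
  obtain ⟨M, hM⟩ := hsup.exists_isGreatest_of_finite
    (setOf_incLabel_finite.subset fun _ h => h.1) ⟨f, hf, hfp.le⟩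
  exact ⟨M, hM, le_antisymm hM.1.2 (hfp ▸ hM.2 ⟨hf, hfp.le⟩ p)⟩

end Consistent

section GreatestLabel

variable {P : Type*} [PartialOrder P] {R : P → Finset ℤ} [Finite P]
  {hR : ∀ p, (R p).Nonempty} {p : P} {k : ℤ} {M : P → ℤ}
  (hM : IsGreatest (labelsAtMost R p k) M)
include hM

lemma apply_eq_maxLabel_of_isGreatest_labelsAtMost (hcons : Consistent R hR) {q : P}
    (hq : ¬ q ≤ p) : M q = maxLabel R hR q := by
  classical
  have hlab : IncLabel R ((Iic p)ᶜ.piecewise (maxLabel R hR) M) :=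
    hcons.incLabel_maxLabel.piecewise _ (isLowerSet_Iic p).compl hM.1.1 (hM.1.1.le_maxLabel hR)
  have hle := hM.2 ⟨hlab, by simpa using hM.1.2⟩ q
  exact le_antisymm (hM.1.1.le_maxLabel hR q) (by simpa [hq] using hle)

lemma raisable_of_isGreatest_labelsAtMost (hcons : Consistent R hR) (hMp : M p = k)
    (hklt : k < maxLabel R hR p) : Raisable R M p := by
  refine hM.1.1.raisable_of_update ((R p).max'_mem (hR p)) (hMp ▸ hklt)
    (fun a hap => (hM.1.1.2 hap).trans (hMp ▸ hklt)) fun b hpb => ?_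
  rw [apply_eq_maxLabel_of_isGreatest_labelsAtMost hM hcons hpb.not_ge]
  exact hcons.strictMono_maxLabel hpb

lemma raisable_iff_of_isGreatest_labelsAtMost (hcons : Consistent R hR) (hMp : M p = k)
    (hklt : k < maxLabel R hR p) {q : P} : Raisable R M q ↔ q = p := by
  refine ⟨fun ⟨g, hg, hlt, heq⟩ => ?_,
    fun h => h ▸ raisable_of_isGreatest_labelsAtMost hM hcons hMp hklt⟩
  by_contra hqp
  by_cases hle : q ≤ p
  · have hgp : g p ≤ k := heq p (Ne.symm hqp) ▸ hM.1.2
    exact (hM.2 ⟨hg, hgp⟩ q).not_gt hlt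
  · rw [apply_eq_maxLabel_of_isGreatest_labelsAtMost hM hcons hle] at hlt
    exact (hg.le_maxLabel hR q).not_gt hlt

lemma meetIrred_of_isGreatest_labelsAtMost (hcons : Consistent R hR)
    (hklt : k < maxLabel R hR p) : MeetIrred R M := by
  refine ⟨hM.1.1, fun hall => ?_, fun a b ha hb hab => ?_⟩
  · exact (hklt.trans_le (hall _ hcons.incLabel_maxLabel p)).not_ge hM.1.2
  · have hp : min (a p) (b p) ≤ k := by simpa [hab] using hM.1.2
    rcases le_total (a p) (b p) with h | h
    · rw [min_eq_left h] at hp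
      exact .inl (le_antisymm (fun q => (congrFun hab q).trans_le (min_le_left _ _))
        (hM.2 ⟨ha, hp⟩))
    · rw [min_eq_right h] at hp
      exact .inr (le_antisymm (fun q => (congrFun hab q).trans_le (min_le_right _ _))
        (hM.2 ⟨hb, hp⟩))

lemma eq_of_isGreatest_labelsAtMost (hMp : M p = k) {f : P → ℤ} (hf : IncLabel R f)
    (hfp : f p = k) (hraise : ∀ q, Raisable R f q → q = p) : f = M := by
  by_contra hne
  obtain ⟨q, hlt, hq⟩ :=
    hf.exists_raisable_of_lt hM.1.1 (lt_of_le_of_ne (hM.2 ⟨hf, hfp.le⟩) hne)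
  rw [hraise q hq, hfp, hMp] at hlt
  exact hlt.false

end GreatestLabel

/-- For each `p ∈ P` and `k ∈ R(p)` with `k ≠ max R(p)`, there is exactly one
meet-irreducible increasing labeling `f` with `f p = k` having `p` as its
only raisable element. -/
theorem stmt4 {P : Type*} [Fintype P] [PartialOrder P]
    (R : P → Finset ℤ) (hR : ∀ p, (R p).Nonempty) (hcons : Consistent R hR)
    (p : P) (k : ℤ) (hk : k ∈ R p) (hkmax : k ≠ (R p).max' (hR p)) :
    ∃! f : P → ℤ, MeetIrred R f ∧ f p = k ∧
      ∀ p' : P, Raisable R f p' ↔ p' = p := by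
  obtain ⟨M, hM, hMp⟩ := hcons.exists_isGreatest_labelsAtMost hk
  have hklt : k < maxLabel R hR p := lt_of_le_of_ne ((R p).le_max' k hk) hkmax
  refine ⟨M, ⟨meetIrred_of_isGreatest_labelsAtMost hM hcons hklt, hMp,
    fun q => raisable_iff_of_isGreatest_labelsAtMost hM hcons hMp hklt⟩, ?_⟩
  rintro f ⟨⟨hf, -, -⟩, hfp, hraise⟩
  exact eq_of_isGreatest_labelsAtMost hM hMp hf hfp fun q => (hraise q).1
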